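/- arXiv:2603.02459 — 2 statements merged into one kernel-verified Lean document; each statement's English description precedes it below -/
import Mathlib

section
/- For all t ≥ 0, the inequality (1+t)^{1+t} ≥ exp(t + t²/(2(1+t))) holds. -/
open Real

/- Writing `u = t / (t + 2)`, so that `1 + t = (1 + u) / (1 - u)`, the series
`log (1 + t) = 2 (u + u³/3 + u⁵/5 + ⋯)` has nonnegative terms, hence `log (1 + t) ≥ 2t / (t + 2)`.
Multiplying by `1 + t` gives `(1 + t) log (1 + t) ≥ t + t² / (t + 2) ≥ t + t² / (2 (1 + t))`. -/

lemma two_mul_div_add_two_le_log_one_add {t : ℝ} (ht : 0 ≤ t) :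
    2 * t / (t + 2) ≤ log (1 + t) := by
  have h := le_hasSum (hasSum_log_one_add ht) 0 fun k _ => by positivity
  simpa [mul_div_assoc] using h

lemma add_sq_div_le_mul_log_one_add {t : ℝ} (ht : 0 ≤ t) :
    t + t ^ 2 / (2 * (1 + t)) ≤ (1 + t) * log (1 + t) := by
  calc t + t ^ 2 / (2 * (1 + t))
      ≤ t + t ^ 2 / (t + 2) := by gcongr; linarith
    _ = (1 + t) * (2 * t / (t + 2)) := by field_simp; ring
    _ ≤ (1 + t) * log (1 + t) := by gcongr; exact two_mul_div_add_two_le_log_one_add ht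

theorem stmt_1 (t : ℝ) (ht : 0 ≤ t) :
    (1 + t) ^ (1 + t) ≥ Real.exp (t + t ^ 2 / (2 * (1 + t))) := by
  rw [ge_iff_le, rpow_def_of_pos (by linarith), exp_le_exp, mul_comm (log _)]
  exact add_sq_div_le_mul_log_one_add ht
end

section
/- Let X and Y be normed linear spaces, T : X → Y a bounded linear operator, and 0 < ε < 1/2. Suppose there exists an ε-net A contained in the closed unit ball B_X of X (i.e., for every x ∈ B_X there is a ∈ A with ‖x − a‖_X ≤ ε) such that α‖x‖_X ≤ ‖Tx‖_Y ≤ β‖x‖_X for all x ∈ A, where α, β > 0. Then for every z ∈ X: α(1 − (3β/α)·ε)‖z‖_X ≤ ‖Tz‖_Y ≤ β(1 + 2ε)‖z‖_X. -/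
theorem stmt_7 {X Y : Type*} [NormedAddCommGroup X] [NormedSpace ℝ X]
    [NormedAddCommGroup Y] [NormedSpace ℝ Y]
    (T : X →L[ℝ] Y) (ε : ℝ) (hε : 0 < ε) (hε' : ε < 1 / 2)
    (A : Set X) (hA : A ⊆ Metric.closedBall 0 1)
    (hnet : ∀ x : X, ‖x‖ ≤ 1 → ∃ a ∈ A, ‖x - a‖ ≤ ε)
    (α β : ℝ) (hα : 0 < α) (hβ : 0 < β)
    (hTA : ∀ x ∈ A, α * ‖x‖ ≤ ‖T x‖ ∧ ‖T x‖ ≤ β * ‖x‖) :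
    ∀ z : X, α * (1 - (3 * β / α) * ε) * ‖z‖ ≤ ‖T z‖ ∧ ‖T z‖ ≤ β * (1 + 2 * ε) * ‖z‖ := by
  have key : ∀ x : X, ‖x‖ ≤ 1 → ‖T x‖ ≤ β + ‖T‖ * ε := by
    intro x hx
    obtain ⟨a, haA, hax⟩ := hnet x hx
    have ha1 : ‖a‖ ≤ 1 := by simpa using hA haA
    have h1 : ‖T a‖ ≤ β := (hTA a haA).2.trans (by nlinarith [norm_nonneg a])
    have h2 : ‖T x - T a‖ ≤ ‖T‖ * ε := by
      rw [← map_sub]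
      exact (T.le_opNorm _).trans (by
        have := T.opNorm_nonneg
        nlinarith)
    calc ‖T x‖ = ‖T a + (T x - T a)‖ := by congr 1; abel
      _ ≤ ‖T a‖ + ‖T x - T a‖ := norm_add_le _ _
      _ ≤ β + ‖T‖ * ε := add_le_add h1 h2
  have hTle : ‖T‖ ≤ β + ‖T‖ * ε := by
    apply T.opNorm_le_bound' (by positivity)
    intro x hx
    have hxpos : 0 < ‖x‖ := (norm_nonneg x).lt_of_ne' hx
    have hu : ‖(‖x‖⁻¹ • x)‖ ≤ 1 := by
      rw [norm_smul, norm_inv, norm_norm, inv_mul_cancel₀ (ne_of_gt hxpos)]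
    have := key _ hu
    rw [map_smul, norm_smul, norm_inv, norm_norm] at this
    calc ‖T x‖ = ‖x‖ * (‖x‖⁻¹ * ‖T x‖) := by field_simp
      _ ≤ ‖x‖ * (β + ‖T‖ * ε) := by
          apply mul_le_mul_of_nonneg_left this hxpos.le
      _ = (β + ‖T‖ * ε) * ‖x‖ := mul_comm _ _
  have h2b : ‖T‖ ≤ 2 * β := by
    nlinarith [mul_nonneg T.opNorm_nonneg hε.le,
      mul_le_mul_of_nonneg_left hε'.le T.opNorm_nonneg]
  have hTb : ‖T‖ ≤ β * (1 + 2 * ε) := by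
    nlinarith [mul_le_mul_of_nonneg_right h2b hε.le]
  intro z
  constructor
  · rcases eq_or_ne z 0 with rfl | hz
    · simp
    · have hzpos : 0 < ‖z‖ := norm_pos_iff.mpr hz
      set u := ‖z‖⁻¹ • z with hu_def
      have hu : ‖u‖ = 1 := by
        rw [hu_def, norm_smul, norm_inv, norm_norm, inv_mul_cancel₀ (ne_of_gt hzpos)]
      obtain ⟨a, haA, hau⟩ := hnet u hu.le
      have hanorm : 1 - ε ≤ ‖a‖ := by
        have := norm_sub_norm_le u a
        rw [hu] at this
        linarith
      have hαβ : α ≤ β := by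
        have hapos : 0 < ‖a‖ := by linarith
        have := hTA a haA
        nlinarith
      have h1 : α * ‖a‖ ≤ ‖T a‖ := (hTA a haA).1
      have h2 : ‖T u - T a‖ ≤ β * (1 + 2 * ε) * ε := by
        rw [← map_sub]
        refine (T.le_opNorm _).trans ?_
        have := T.opNorm_nonneg
        nlinarith
      have h3 : α * (1 - ε) - β * (1 + 2 * ε) * ε ≤ ‖T u‖ := by
        have := norm_sub_norm_le (T a) (T u)
        rw [norm_sub_rev] at this
        nlinarith [mul_le_mul_of_nonneg_left hanorm hα.le]
      have hTu : α * (1 - (3 * β / α) * ε) ≤ ‖T u‖ := by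
        have hexp : α * (1 - (3 * β / α) * ε) = α - 3 * β * ε := by
          field_simp
        rw [hexp]
        nlinarith [mul_le_mul_of_nonneg_right hαβ hε.le,
          mul_nonneg (mul_nonneg hβ.le hε.le) (by linarith : (0:ℝ) ≤ 1 - 2 * ε)]
      have hTz : ‖T u‖ = ‖z‖⁻¹ * ‖T z‖ := by
        rw [hu_def, map_smul, norm_smul, norm_inv, norm_norm]
      calc α * (1 - (3 * β / α) * ε) * ‖z‖ ≤ ‖T u‖ * ‖z‖ :=
            mul_le_mul_of_nonneg_right hTu hzpos.le
        _ = ‖T z‖ := by rw [hTz]; field_simp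
  · calc ‖T z‖ ≤ ‖T‖ * ‖z‖ := T.le_opNorm z
      _ ≤ β * (1 + 2 * ε) * ‖z‖ := mul_le_mul_of_nonneg_right hTb (norm_nonneg z)
end
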